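/- Let H be an infinite-dimensional separable complex Hilbert space and let 𝕋 denote the circle (e.g. the unit circle in ℂ). Let τ : C(𝕋, H →L[ℂ] H) → ℂ be a continuous (sup-norm-bounded) ℂ-linear functional such that τ(f * g) = τ(g * f) (pointwise products) for all continuous functions f, g : 𝕋 → (H →L[ℂ] H) whose values are all compact operators. Then τ(f) = 0 for every continuous f : 𝕋 → (H →L[ℂ] H) with all values compact. (This says every bounded tracial functional on 𝒦 ⊗ C(𝕋) vanishes, which is why a tracial Haar measure on the Natsume–Olsen sphere would have to kill the ideal 𝒦 ⊗ C(𝕋).) -/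

import Mathlib

/-!
Let `b` be a Hilbert basis of `H` and `P s = ∑ i ∈ s, |b i⟩⟨b i|` for finite `s`. The `P s` are
contractions converging strongly to the identity, so `P s * a → a` in norm for every compact `a`,
uniformly over the compact set of values of `f`; hence `τ f = lim τ (P s * f)`. Each `τ (P s * f)`
vanishes: with `e k i = |b k⟩⟨b i|`, traciality gives `τ (e k i * f * e i k) = τ (e i i * f)` for
every `k`, while `∑ k ∈ S, e k i * f * e i k = ⟪b i, f (b i)⟫ • P S` has norm at most `‖f‖`. So
`#S * ‖τ (e i i * f)‖ ≤ ‖τ‖ * ‖f‖` for finite sets `S` of any size, as the basis is infinite.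
-/

open Filter Topology InnerProductSpace

theorem EquicontinuousOn.tendstoUniformlyOn_of_tendsto {ι X α : Type*} [TopologicalSpace X]
    [UniformSpace α] {F : ι → X → α} {f : X → α} {K : Set X} (hK : IsCompact K)
    (hF : EquicontinuousOn F K) {l : Filter ι} (h : ∀ x ∈ K, Tendsto (F · x) l (𝓝 (f x))) :
    TendstoUniformlyOn F f l K := by
  have hpi := tendsto_pi_nhds.2 fun x : ⋃₀ {K} => h x (by simpa using x.2)
  refine UniformOnFun.tendsto_iff_tendstoUniformlyOn.1 ?_ K (Set.mem_singleton K)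
  exact (EquicontinuousOn.tendsto_uniformOnFun_iff_pi' (𝔖 := {K}) (by simpa using hK)
    (by simpa using hF) l f).2 hpi

section StrongConvergence

variable {𝕜 E F ι : Type*} [RCLike 𝕜] [NormedAddCommGroup E] [NormedSpace 𝕜 E]
  [NormedAddCommGroup F] [NormedSpace 𝕜 F] {l : Filter ι} {T : ι → F →L[𝕜] F} {C : NNReal}

theorem IsCompactOperator.tendsto_comp_of_tendsto_apply (hT : ∀ i, ‖T i‖ ≤ C)
    (hTx : ∀ x, Tendsto (fun i => T i x) l (𝓝 x)) {a : E →L[𝕜] F} (ha : IsCompactOperator a) :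
    Tendsto (fun i => T i ∘L a) l (𝓝 a) := by
  have hK := ha.isCompact_closure_image_closedBall (f := (a : E →ₗ[𝕜] F)) 1
  have hunif : TendstoUniformlyOn (fun i => ⇑(T i)) id l _ :=
    EquicontinuousOn.tendstoUniformlyOn_of_tendsto hK
      ((LipschitzWith.uniformEquicontinuous _ C fun i =>
        (T i).lipschitzWith_of_opNorm_le (hT i)).equicontinuous.equicontinuousOn _)
      fun x _ => hTx x
  rw [Metric.tendsto_nhds]
  intro ε hε
  filter_upwards [Metric.tendstoUniformlyOn_iff.1 hunif (ε / 2) (half_pos hε)] with i hi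
  rw [dist_eq_norm]
  refine lt_of_le_of_lt (ContinuousLinearMap.opNorm_le_of_unit_norm (half_pos hε).le
    fun x hx => ?_) (half_lt_self hε)
  have hx : a x ∈ closure ((a : E →ₗ[𝕜] F) '' Metric.closedBall 0 1) :=
    subset_closure ⟨x, by simp [hx], rfl⟩
  simpa [dist_eq_norm, norm_sub_rev] using (hi (a x) hx).le

theorem ContinuousMap.tendsto_const_mul_of_tendsto_apply {X : Type*} [TopologicalSpace X]
    [CompactSpace X] (hT : ∀ i, ‖T i‖ ≤ C) (hTx : ∀ x, Tendsto (fun i => T i x) l (𝓝 x))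
    {f : C(X, F →L[𝕜] F)} (hf : ∀ x, IsCompactOperator (f x)) :
    Tendsto (fun i => ContinuousMap.const X (T i) * f) l (𝓝 f) := by
  have hLip : ∀ i, LipschitzWith C (fun a : F →L[𝕜] F => T i * a) := fun i =>
    LipschitzWith.of_dist_le_mul fun a a' => by
      rw [dist_eq_norm, dist_eq_norm, ← mul_sub]
      exact (norm_mul_le _ _).trans (by gcongr; exact hT i)
  have hunif : TendstoUniformlyOn (fun i a => T i * a) id l (Set.range f) :=
    EquicontinuousOn.tendstoUniformlyOn_of_tendsto (isCompact_range f.continuous)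
      ((LipschitzWith.uniformEquicontinuous _ C hLip).equicontinuous.equicontinuousOn _)
      (by
        rintro _ ⟨x, rfl⟩
        exact (hf x).tendsto_comp_of_tendsto_apply hT hTx)
  rw [ContinuousMap.tendsto_iff_tendstoUniformly, ← tendstoUniformlyOn_univ]
  simpa [Function.comp_def] using hunif.comp f

end StrongConvergence

theorem Orthonormal.norm_sum_rankOne_le_one {𝕜 E ι : Type*} [RCLike 𝕜] [NormedAddCommGroup E]
    [InnerProductSpace 𝕜 E] {v : ι → E} (hv : Orthonormal 𝕜 v) (s : Finset ι) :
    ‖∑ i ∈ s, rankOne 𝕜 (v i) (v i)‖ ≤ 1 := by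
  classical
  have := (OrthonormalBasis.span hv s).starProjection_eq_sum_rankOne
  simp only [OrthonormalBasis.span_apply] at this
  rw [← Finset.sum_coe_sort s, ← this]
  exact Submodule.starProjection_norm_le _

theorem HilbertBasis.tendsto_sum_rankOne_apply {𝕜 E ι : Type*} [RCLike 𝕜] [NormedAddCommGroup E]
    [InnerProductSpace 𝕜 E] (b : HilbertBasis ι 𝕜 E) (x : E) :
    Tendsto (fun s : Finset ι => (∑ i ∈ s, rankOne 𝕜 (b i) (b i)) x) atTop (𝓝 x) := by
  simpa [HasSum, b.repr_apply_apply] using b.hasSum_repr x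

theorem HilbertBasis.infinite_of_not_finiteDimensional {𝕜 E ι : Type*} [RCLike 𝕜]
    [NormedAddCommGroup E] [InnerProductSpace 𝕜 E] (b : HilbertBasis ι 𝕜 E)
    (hE : ¬FiniteDimensional 𝕜 E) : Infinite ι := by
  by_contra hι
  have : Fintype ι := @Fintype.ofFinite ι (not_infinite_iff_finite.1 hι)
  exact hE (Module.Finite.of_basis b.toOrthonormalBasis.toBasis)

theorem eq_zero_of_forall_natCast_mul_norm_le {E : Type*} [NormedAddCommGroup E] {z : E}
    {C : ℝ} (h : ∀ n : ℕ, n * ‖z‖ ≤ C) : z = 0 := by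
  by_contra hz
  obtain ⟨n, hn⟩ := exists_nat_gt (C / ‖z‖)
  rw [div_lt_iff₀ (norm_pos_iff.2 hz)] at hn
  linarith [h n]

section RankOne

variable {𝕜 E : Type*} [RCLike 𝕜] [NormedAddCommGroup E] [InnerProductSpace 𝕜 E]

theorem InnerProductSpace.isCompactOperator_rankOne (x y : E) :
    IsCompactOperator (rankOne 𝕜 x y) :=
  (isCompactOperator_of_locallyCompactSpace_rng (ContinuousLinearMap.toSpanSingleton 𝕜 x)).comp_clm
    (innerSL 𝕜 y)

theorem InnerProductSpace.rankOne_mul_mul_rankOne (x y y' z : E) (a : E →L[𝕜] E) :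
    rankOne 𝕜 x y * a * rankOne 𝕜 y' z = inner 𝕜 y (a y') • rankOne 𝕜 x z := by
  ext w
  simp [smul_smul, mul_comm]

end RankOne

section TracialFunctional

-- Without `CompleteSpace E`, instance search fails for the normed ring `C(X, E →L[ℂ] E)`.
variable {X E ι : Type*} [TopologicalSpace X] [NormedAddCommGroup E] [InnerProductSpace ℂ E]
  [CompleteSpace E]

def IsTracialOnCompactValued (τ : C(X, E →L[ℂ] E) →L[ℂ] ℂ) : Prop :=
  ∀ f g : C(X, E →L[ℂ] E),
    (∀ x, IsCompactOperator (f x)) → (∀ x, IsCompactOperator (g x)) → τ (f * g) = τ (g * f)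

theorem IsTracialOnCompactValued.map_const_rankOne_mul_mul {τ : C(X, E →L[ℂ] E) →L[ℂ] ℂ}
    (hτ : IsTracialOnCompactValued τ) {u w : E} (hw : ‖w‖ = 1) (f : C(X, E →L[ℂ] E)) :
    τ (ContinuousMap.const X (rankOne ℂ w u) * f * ContinuousMap.const X (rankOne ℂ u w)) =
      τ (f * ContinuousMap.const X (rankOne ℂ u u)) := by
  rw [mul_assoc, hτ _ _ (fun _ => isCompactOperator_rankOne w u)
    (fun x => (isCompactOperator_rankOne u w).clm_comp (f x)), mul_assoc]
  congr 2
  ext1 x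
  simp [rankOne_comp_rankOne, ContinuousLinearMap.mul_def, hw]

variable [CompactSpace X]

theorem norm_sum_const_rankOne_mul_mul_le {v : ι → E} (hv : Orthonormal ℂ v) (i : ι)
    (S : Finset ι) (f : C(X, E →L[ℂ] E)) :
    ‖∑ k ∈ S, ContinuousMap.const X (rankOne ℂ (v k) (v i)) * f *
      ContinuousMap.const X (rankOne ℂ (v i) (v k))‖ ≤ ‖f‖ := by
  refine (ContinuousMap.norm_le _ (norm_nonneg f)).2 fun x => ?_
  have hcoef : ‖inner ℂ (v i) (f x (v i))‖ ≤ ‖f x‖ := calc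
    _ ≤ ‖v i‖ * ‖f x (v i)‖ := norm_inner_le_norm _ _
    _ ≤ ‖f x‖ := by simpa [hv.1 i] using (f x).le_opNorm (v i)
  calc ‖(∑ k ∈ S, ContinuousMap.const X (rankOne ℂ (v k) (v i)) * f *
        ContinuousMap.const X (rankOne ℂ (v i) (v k))) x‖
      = ‖inner ℂ (v i) (f x (v i)) • ∑ k ∈ S, rankOne ℂ (v k) (v k)‖ := by
        simp [ContinuousMap.sum_apply, rankOne_mul_mul_rankOne, Finset.smul_sum]
    _ ≤ ‖f x‖ * 1 := (norm_smul_le _ _).trans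
        (mul_le_mul hcoef (hv.norm_sum_rankOne_le_one S) (norm_nonneg _) (norm_nonneg _))
    _ ≤ ‖f‖ := by simpa using f.norm_coe_le_norm x

variable {τ : C(X, E →L[ℂ] E) →L[ℂ] ℂ}

theorem IsTracialOnCompactValued.map_const_rankOne_mul_eq_zero (hτ : IsTracialOnCompactValued τ)
    [Infinite ι] {v : ι → E} (hv : Orthonormal ℂ v) (i : ι) {f : C(X, E →L[ℂ] E)}
    (hf : ∀ x, IsCompactOperator (f x)) :
    τ (ContinuousMap.const X (rankOne ℂ (v i) (v i)) * f) = 0 := by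
  have hcomm : τ (f * ContinuousMap.const X (rankOne ℂ (v i) (v i))) =
      τ (ContinuousMap.const X (rankOne ℂ (v i) (v i)) * f) :=
    hτ _ _ hf fun _ => isCompactOperator_rankOne _ _
  refine eq_zero_of_forall_natCast_mul_norm_le (C := ‖τ‖ * ‖f‖) fun n => ?_
  obtain ⟨S, rfl⟩ := Infinite.exists_subset_card_eq ι n
  calc (S.card : ℝ) * ‖τ (ContinuousMap.const X (rankOne ℂ (v i) (v i)) * f)‖
      = ‖τ (∑ k ∈ S, ContinuousMap.const X (rankOne ℂ (v k) (v i)) * f *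
          ContinuousMap.const X (rankOne ℂ (v i) (v k)))‖ := by
        rw [map_sum, Finset.sum_congr rfl fun k _ => hτ.map_const_rankOne_mul_mul (hv.1 k) f,
          hcomm, Finset.sum_const, nsmul_eq_mul, norm_mul, Complex.norm_natCast]
    _ ≤ ‖τ‖ * ‖f‖ := τ.le_opNorm_of_le (norm_sum_const_rankOne_mul_mul_le hv i S f)

theorem IsTracialOnCompactValued.map_const_sum_rankOne_mul_eq_zero
    (hτ : IsTracialOnCompactValued τ) [Infinite ι] {v : ι → E} (hv : Orthonormal ℂ v)
    (s : Finset ι) {f : C(X, E →L[ℂ] E)} (hf : ∀ x, IsCompactOperator (f x)) :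
    τ (ContinuousMap.const X (∑ i ∈ s, rankOne ℂ (v i) (v i)) * f) = 0 := by
  have : ContinuousMap.const X (∑ i ∈ s, rankOne ℂ (v i) (v i)) * f =
      ∑ i ∈ s, ContinuousMap.const X (rankOne ℂ (v i) (v i)) * f := by
    ext1 x
    simp [ContinuousMap.sum_apply, Finset.sum_mul]
  rw [this, map_sum]
  exact Finset.sum_eq_zero fun i _ => hτ.map_const_rankOne_mul_eq_zero hv i hf

end TracialFunctional

theorem tracial_functional_vanishes_on_compact_valued_functions_general
    (H : Type*) [NormedAddCommGroup H] [InnerProductSpace ℂ H] [CompleteSpace H]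
    (hinf : ¬ FiniteDimensional ℂ H)
    (τ : C(Circle, H →L[ℂ] H) →L[ℂ] ℂ)
    (htr : ∀ f g : C(Circle, H →L[ℂ] H),
      (∀ x, IsCompactOperator (f x)) → (∀ x, IsCompactOperator (g x)) →
        τ (f * g) = τ (g * f))
    (f : C(Circle, H →L[ℂ] H)) (hf : ∀ x, IsCompactOperator (f x)) : τ f = 0 := by
  obtain ⟨w, b, -⟩ := exists_hilbertBasis ℂ H
  have := b.infinite_of_not_finiteDimensional hinf
  have hτf : Tendsto (fun s => τ (ContinuousMap.const Circle
      (∑ i ∈ s, rankOne ℂ (b i) (b i)) * f)) atTop (𝓝 (τ f)) :=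
    (τ.continuous.tendsto f).comp <| ContinuousMap.tendsto_const_mul_of_tendsto_apply
      (C := 1) b.orthonormal.norm_sum_rankOne_le_one b.tendsto_sum_rankOne_apply hf
  simp only [IsTracialOnCompactValued.map_const_sum_rankOne_mul_eq_zero htr b.orthonormal _ hf]
    at hτf
  exact tendsto_nhds_unique hτf tendsto_const_nhds

/-- Let `H` be an infinite-dimensional separable complex Hilbert space and `𝕋` the circle.
Every sup-norm-bounded linear functional on `C(𝕋, B(H))` that is tracial on the ideal of
functions with compact-operator values vanishes on that ideal (`𝒦 ⊗ C(𝕋)`). -/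
theorem tracial_functional_vanishes_on_compact_valued_functions
    (H : Type*) [NormedAddCommGroup H] [InnerProductSpace ℂ H] [CompleteSpace H]
    [TopologicalSpace.SeparableSpace H] (hinf : ¬ FiniteDimensional ℂ H)
    (τ : C(Circle, H →L[ℂ] H) →L[ℂ] ℂ)
    (htr : ∀ f g : C(Circle, H →L[ℂ] H),
      (∀ x, IsCompactOperator (f x)) → (∀ x, IsCompactOperator (g x)) →
        τ (f * g) = τ (g * f))
    (f : C(Circle, H →L[ℂ] H)) (hf : ∀ x, IsCompactOperator (f x)) : τ f = 0 :=
  tracial_functional_vanishes_on_compact_valued_functions_general H hinf τ htr f hf
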